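/- arXiv:2106.10630 — 2 statements merged into one kernel-verified Lean document; each statement's English description precedes it below -/
import Mathlib

section
/- In the cohit space (QP_5)_67, the classes [x_1x_2x_3x_4x_5·a²], where a ranges over the admissible monomials of degree 31 in P_5, are pairwise distinct and form a linearly independent set over 𝔽₂. -/
open MvPolynomial

noncomputable section

/-- `P n` is the polynomial algebra `𝔽₂[x_1, …, x_n]`. -/
abbrev P (n : ℕ) : Type := MvPolynomial (Fin n) (ZMod 2)

/-- The total Steenrod square: the `𝔽₂`-algebra endomorphism of `P n`
with `Sq (x_j) = x_j + x_j ^ 2`. -/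
def SqT (n : ℕ) : P n →ₐ[ZMod 2] P n := aeval fun j => X j + X j ^ 2

/-- `u` is hit (in degree `d`): `u = ∑_{i ≥ 1} Sq^i (f i)` where `f i` is homogeneous
of degree `d - i`; here `Sq^i (f i)` is the degree-`d` homogeneous component of
`Sq (f i)`. -/
def IsHit (n d : ℕ) (u : P n) : Prop :=
  ∃ f : ℕ → P n,
    (∀ i, f i ∈ homogeneousSubmodule (Fin n) (ZMod 2) (d - i)) ∧
    u = ∑ i ∈ Finset.Icc 1 d, homogeneousComponent d (SqT n (f i))

/-- The homogeneous part `(P_n)_d`. -/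
abbrev homSub (n d : ℕ) : Submodule (ZMod 2) (P n) := homogeneousSubmodule (Fin n) (ZMod 2) d

/-- The subspace of hit elements of degree `d` (the span of the set of hit elements;
this set is already closed under addition, so this is just the set of hit elements). -/
def hitSub (n d : ℕ) : Submodule (ZMod 2) (P n) := Submodule.span (ZMod 2) {u | IsHit n d u}

/-- The cohit space `(QP_n)_d = (P_n)_d / (A⁺P_n)_d`. -/
abbrev QP (n d : ℕ) : Type :=
  ↥(homSub n d) ⧸ (hitSub n d).comap (homSub n d).subtype

/-- The class `[f]` in `(QP_n)_d` of a polynomial `f` (via its degree-`d` homogeneous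
component; for `f` homogeneous of degree `d` this is the class of `f` itself). -/
def cls (n d : ℕ) (f : P n) : QP n d :=
  Submodule.Quotient.mk
    ⟨homogeneousComponent d f,
      (mem_homogeneousSubmodule _ _).2 (homogeneousComponent_isHomogeneous d f)⟩

/-- The monomial `x^a = x_1^{a_1} ⋯ x_n^{a_n}`. -/
def mono {n : ℕ} (a : Fin n →₀ ℕ) : P n := monomial a 1

/-- The (total) degree of the monomial with exponent vector `a`. -/
def degA {n : ℕ} (a : Fin n →₀ ℕ) : ℕ := ∑ i, a i

/-- The weight vector: `wVec a t = ω_{t+1}(x^a) = ∑_j α_t(a_j)`. -/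
def wVec {n : ℕ} (a : Fin n →₀ ℕ) : ℕ → ℕ :=
  fun t => ∑ j, if Nat.testBit (a j) t then 1 else 0

/-- Left lexicographic (strict) order on sequences. -/
def lexLtN (f g : ℕ → ℕ) : Prop := ∃ i, (∀ j, j < i → f j = g j) ∧ f i < g i

/-- Left lexicographic (strict) order on exponent vectors. -/
def lexLtS {n : ℕ} (a b : Fin n →₀ ℕ) : Prop :=
  ∃ i : Fin n, (∀ j, j < i → a j = b j) ∧ a i < b i

/-- The order on monomials: `u < v` iff `ω(u) < ω(v)` lexicographically, or
`ω(u) = ω(v)` and `σ(u) < σ(v)` lexicographically. -/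
def monLt {n : ℕ} (a b : Fin n →₀ ℕ) : Prop :=
  lexLtN (wVec a) (wVec b) ∨ (wVec a = wVec b ∧ lexLtS a b)

/-- A monomial is admissible iff it is not inadmissible, i.e. there is no finite set of
monomials of the same degree, all smaller than it, such that subtracting their sum
yields a hit polynomial. -/
def Admissible {n : ℕ} (a : Fin n →₀ ℕ) : Prop :=
  ¬ ∃ S : Finset (Fin n →₀ ℕ),
      (∀ b ∈ S, degA b = degA a ∧ monLt b a) ∧
      IsHit n (degA a) (mono a - ∑ b ∈ S, mono b)

/-- `P_n^0`: the span of the monomials in which some variable has exponent `0`. -/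
def PzeroSub (n : ℕ) : Submodule (ZMod 2) (P n) :=
  Submodule.span (ZMod 2) {x : P n | ∃ a : Fin n →₀ ℕ, (∃ i, a i = 0) ∧ x = mono a}

/-- `P_n^+`: the span of the monomials in which every variable occurs. -/
def PplusSub (n : ℕ) : Submodule (ZMod 2) (P n) :=
  Submodule.span (ZMod 2) {x : P n | ∃ a : Fin n →₀ ℕ, (∀ i, 0 < a i) ∧ x = mono a}

/-- `(QP_n^0)_d`: the image of `(P_n^0)_d` in `(QP_n)_d`. -/
def Qzero (n d : ℕ) : Submodule (ZMod 2) (QP n d) :=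
  (((PzeroSub n).comap (homSub n d).subtype)).map
    ((hitSub n d).comap (homSub n d).subtype).mkQ

/-- `(QP_n^+)_d`: the image of `(P_n^+)_d` in `(QP_n)_d`. -/
def Qplus (n d : ℕ) : Submodule (ZMod 2) (QP n d) :=
  (((PplusSub n).comap (homSub n d).subtype)).map
    ((hitSub n d).comap (homSub n d).subtype).mkQ

/-- Kameko-type map `S_5 : P_5 → P_5`, the `𝔽₂`-linear map with
`S_5(x_1x_2x_3x_4x_5 · y²) = y` on monomials of that form and `S_5 = 0` on all
other monomials. -/
def S5 : P 5 →ₗ[ZMod 2] P 5 :=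
  (basisMonomials (Fin 5) (ZMod 2)).constr (ZMod 2) fun a =>
    if ∀ i, Odd (a i) then mono (Finsupp.equivFunOnFinite.symm fun i => a i / 2) else 0

/-- `Φ(f) = x_1x_2x_3x_4x_5 · f²`. -/
def Phi (f : P 5) : P 5 := (∏ i : Fin 5, X i) * f ^ 2

/-!
Kameko's map `S5` commutes with the total Steenrod square and satisfies
`S5 (p · r²) = S5 p · r`; hence it maps hit polynomials of degree `2m + 5` to hit polynomials
of degree `m`, and it is a left inverse of `Phi`. A relation `∑_{a ∈ T} [Phi a] = 0` therefore
makes `∑_{a ∈ T} a` hit in degree `31`, which for `T ≠ ∅`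
contradicts the admissibility of the largest monomial of `T`.
-/

namespace Kameko

open Finsupp

section Monomials

variable {n : ℕ}

lemma mono_mul (a b : Fin n →₀ ℕ) : mono a * mono b = mono (a + b) := by
  simp [mono, monomial_mul]

lemma mono_pow (a : Fin n →₀ ℕ) (k : ℕ) : mono a ^ k = mono (k • a) := by
  simp [mono, monomial_pow]

lemma monomial_eq_smul_mono (a : Fin n →₀ ℕ) (c : ZMod 2) : monomial a c = c • mono a := by
  rw [mono, smul_monomial, smul_eq_mul, mul_one]

def sqfree (t : Finset (Fin n)) : Fin n →₀ ℕ := ∑ i ∈ t, single i 1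

lemma sqfree_apply (t : Finset (Fin n)) (i : Fin n) : sqfree t i = if i ∈ t then 1 else 0 := by
  simp [sqfree, Finsupp.finsetSum_apply, single_apply]

lemma prod_X_eq_mono (t : Finset (Fin n)) : ∏ i ∈ t, (X i : P n) = mono (sqfree t) := by
  simp only [mono, sqfree, monomial_sum_one, X]

def half (a : Fin n →₀ ℕ) : Fin n →₀ ℕ := equivFunOnFinite.symm fun i => a i / 2

lemma half_apply (a : Fin n →₀ ℕ) (i : Fin n) : half a i = a i / 2 := rfl

lemma degA_eq_of_forall_odd {b : Fin n →₀ ℕ} (h : ∀ i, Odd (b i)) :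
    degA b = 2 * degA (half b) + n := by
  have hb : ∀ i, b i = 2 * half b i + 1 := fun i => by
    obtain ⟨k, hk⟩ := h i
    rw [half_apply]
    omega
  simp only [degA, hb, Finset.sum_add_distrib, ← Finset.mul_sum]
  simp

lemma mono_eq_prod_X_mul_sq (a : Fin n →₀ ℕ) :
    mono a = (∏ i ∈ Finset.univ.filter (fun i => Odd (a i)), X i) * mono (half a) ^ 2 := by
  rw [prod_X_eq_mono, mono_pow, mono_mul]
  congr 1
  ext i
  simp only [Finsupp.add_apply, Finsupp.smul_apply, smul_eq_mul, sqfree_apply, half_apply,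
    Finset.mem_filter, Finset.mem_univ, true_and]
  split_ifs with h
  · obtain ⟨k, hk⟩ := h
    omega
  · obtain ⟨k, hk⟩ := Nat.not_odd_iff_even.1 h
    omega

lemma SqT_prod_X (t : Finset (Fin n)) :
    SqT n (∏ i ∈ t, X i) = ∏ i ∈ t, (X i + X i ^ 2) := by
  simp [SqT]

lemma degree_eq_degA (a : Fin n →₀ ℕ) : a.degree = degA a :=
  Finset.sum_subset (Finset.subset_univ _) fun _ _ hi => notMem_support_iff.mp hi

lemma mono_mem_homSub (a : Fin n →₀ ℕ) : mono a ∈ homSub n (degA a) :=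
  (mem_homogeneousSubmodule _ _).2 (isHomogeneous_monomial 1 (degree_eq_degA a))

lemma homogeneousComponent_mono (d : ℕ) (a : Fin n →₀ ℕ) :
    homogeneousComponent d (mono a : P n) = if degA a = d then mono a else 0 := by
  rw [homogeneousComponent_of_mem (mono_mem_homSub a)]
  simp only [eq_comm]

end Monomials

section Hit

variable {n d : ℕ}

lemma isHit_zero : IsHit n d 0 :=
  ⟨fun _ => 0, fun _ => Submodule.zero_mem _, by simp⟩

lemma isHit_add {u v : P n} (hu : IsHit n d u) (hv : IsHit n d v) : IsHit n d (u + v) := by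
  obtain ⟨f, hf, rfl⟩ := hu
  obtain ⟨g, hg, rfl⟩ := hv
  refine ⟨f + g, fun i => Submodule.add_mem _ (hf i) (hg i), ?_⟩
  simp only [Pi.add_apply, map_add, Finset.sum_add_distrib]

lemma isHit_smul {u : P n} (c : ZMod 2) (hu : IsHit n d u) : IsHit n d (c • u) := by
  obtain ⟨f, hf, rfl⟩ := hu
  refine ⟨c • f, fun i => Submodule.smul_mem _ c (hf i), ?_⟩
  simp only [Pi.smul_apply, map_smul, Finset.smul_sum]

lemma isHit_of_mem_hitSub {u : P n} (hu : u ∈ hitSub n d) : IsHit n d u := by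
  induction hu using Submodule.span_induction with
  | mem x hx => exact hx
  | zero => exact isHit_zero
  | add x y _ _ hx hy => exact isHit_add hx hy
  | smul c x _ hx => exact isHit_smul c hx

lemma cls_add (f g : P n) : cls n d (f + g) = cls n d f + cls n d g := by
  simp only [cls, map_add, ← Submodule.Quotient.mk_add]
  rfl

lemma cls_sum {ι : Type*} (s : Finset ι) (f : ι → P n) :
    cls n d (∑ i ∈ s, f i) = ∑ i ∈ s, cls n d (f i) :=
  map_sum (AddMonoidHom.mk' (cls n d) cls_add) f s

lemma cls_eq_zero_iff (f : P n) : cls n d f = 0 ↔ homogeneousComponent d f ∈ hitSub n d :=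
  Submodule.Quotient.mk_eq_zero _

end Hit

section Order

variable {n : ℕ}

def key (a : Fin n →₀ ℕ) : Lex (Lex (ℕ → ℕ) × Lex (Fin n →₀ ℕ)) :=
  toLex (toLex (wVec a), toLex a)

lemma monLt_of_key_lt {a b : Fin n →₀ ℕ} (h : key a < key b) : monLt a b := by
  rcases Prod.Lex.lt_iff.1 h with h | ⟨h, h'⟩
  · exact Or.inl h
  · exact Or.inr ⟨congrArg ofLex h, h'⟩

lemma key_injective : Function.Injective (key (n := n)) :=
  fun _ _ h => toLex.injective (Prod.mk.inj (toLex.injective h)).2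

lemma exists_forall_monLt (T : Finset (Fin n →₀ ℕ)) (hT : T.Nonempty) :
    ∃ a ∈ T, ∀ b ∈ T, b ≠ a → monLt b a := by
  obtain ⟨a, ha, hmax⟩ := T.exists_max_image key hT
  exact ⟨a, ha, fun b hb hne =>
    monLt_of_key_lt ((hmax b hb).lt_of_ne fun h => hne (key_injective h))⟩

theorem not_isHit_sum_mono {d : ℕ} {T : Finset (Fin n →₀ ℕ)} (hT : T.Nonempty)
    (hadm : ∀ a ∈ T, degA a = d ∧ Admissible a) : ¬ IsHit n d (∑ a ∈ T, mono a) := by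
  intro hhit
  obtain ⟨a, haT, hmax⟩ := exists_forall_monLt T hT
  obtain ⟨rfl, ha⟩ := hadm a haT
  refine ha ⟨T.erase a, fun b hb => ?_, ?_⟩
  · have hbT := Finset.mem_of_mem_erase hb
    exact ⟨(hadm b hbT).1, hmax b hbT (Finset.ne_of_mem_erase hb)⟩
  · rwa [CharTwo.sub_eq_add, Finset.add_sum_erase _ _ haT]

end Order

lemma linearIndependent_zmod_two_of_sum_eq_zero {ι M : Type*} [AddCommGroup M]
    [Module (ZMod 2) M] {v : ι → M} (h : ∀ s : Finset ι, ∑ i ∈ s, v i = 0 → s = ∅) :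
    LinearIndependent (ZMod 2) v := by
  have hcases : ∀ c : ZMod 2, c = 0 ∨ c = 1 := by decide
  rw [linearIndependent_iff']
  intro s g hg i hi
  have hsupp : s.filter (fun j => g j = 1) = ∅ := by
    refine h _ ?_
    rw [← hg, Finset.sum_filter]
    refine Finset.sum_congr rfl fun j _ => ?_
    rcases hcases (g j) with hj | hj <;> simp [hj]
  refine (hcases (g i)).resolve_right fun hgi => ?_
  simpa [hsupp] using (Finset.mem_filter (p := fun j => g j = 1)).2 ⟨hi, hgi⟩

lemma S5_mono (a : Fin 5 →₀ ℕ) :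
    S5 (mono a) = if ∀ i, Odd (a i) then mono (half a) else 0 := by
  rw [S5, show mono a = basisMonomials (Fin 5) (ZMod 2) a by rw [coe_basisMonomials]; rfl,
    Module.Basis.constr_basis]
  rfl

lemma S5_prod_X (t : Finset (Fin 5)) :
    S5 (∏ i ∈ t, X i) = if t = Finset.univ then 1 else 0 := by
  rw [prod_X_eq_mono, S5_mono]
  by_cases ht : t = Finset.univ
  · subst ht
    have hhalf : half (sqfree (Finset.univ : Finset (Fin 5))) = 0 := by
      ext i
      simp [half_apply, sqfree_apply]
    rw [if_pos fun i => by simp [sqfree_apply], hhalf, mono, monomial_zero', map_one, if_pos rfl]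
  · obtain ⟨i, hi⟩ : ∃ i, i ∉ t := by simpa [Finset.eq_univ_iff_forall] using ht
    rw [if_neg ht, if_neg fun h => by simpa [sqfree_apply, hi] using h i]

lemma S5_mono_mul_sq (a b : Fin 5 →₀ ℕ) :
    S5 (mono a * mono b ^ 2) = S5 (mono a) * mono b := by
  have hodd : (∀ i, Odd ((a + 2 • b) i)) ↔ ∀ i, Odd (a i) := by
    refine forall_congr' fun i => ?_
    simp [Nat.odd_add, parity_simps]
  rw [mono_pow, mono_mul, S5_mono, S5_mono]
  by_cases h : ∀ i, Odd (a i)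
  · rw [if_pos (hodd.2 h), if_pos h, mono_mul]
    congr 1
    ext i
    obtain ⟨k, hk⟩ := h i
    simp only [half_apply, Finsupp.add_apply, Finsupp.smul_apply, smul_eq_mul]
    omega
  · rw [if_neg (mt hodd.1 h), if_neg h, zero_mul]

lemma S5_mul_sq (p r : P 5) : S5 (p * r ^ 2) = S5 p * r := by
  induction p using induction_on' with
  | monomial a c =>
    induction r using induction_on' with
    | monomial b e =>
      have he : e ^ 2 = e := by revert e; decide
      simp only [monomial_eq_smul_mono, smul_pow, he, smul_mul_smul, map_smul,
        S5_mono_mul_sq]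
    | add r s hr hs => rw [CharTwo.add_sq, mul_add, map_add, hr, hs, mul_add]
  | add p q hp hq => rw [add_mul, map_add, hp, hq, map_add, add_mul]

lemma S5_Phi (f : P 5) : S5 (Phi f) = f := by
  rw [Phi, S5_mul_sq, S5_prod_X, if_pos rfl, one_mul]

-- Expanding the product, only the term without squared factors survives `S5`.
lemma S5_prod_X_add_X_sq (t : Finset (Fin 5)) :
    S5 (∏ i ∈ t, (X i + X i ^ 2)) = if t = Finset.univ then 1 else 0 := by
  simp only [Finset.prod_add, Finset.prod_pow, map_sum, S5_mul_sq, S5_prod_X, ite_mul, one_mul,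
    zero_mul]
  simp only [Finset.sum_ite_eq', Finset.mem_powerset, Finset.univ_subset_iff]
  split_ifs with ht
  · rw [ht, Finset.sdiff_self, Finset.prod_empty]
  · rfl

lemma S5_SqT_mono (a : Fin 5 →₀ ℕ) : S5 (SqT 5 (mono a)) = SqT 5 (S5 (mono a)) := by
  rw [mono_eq_prod_X_mul_sq a, map_mul, map_pow, S5_mul_sq, SqT_prod_X, S5_prod_X_add_X_sq,
    S5_mul_sq, S5_prod_X]
  simp only [Finset.filter_eq_self, Finset.mem_univ, true_implies]
  split_ifs <;> simp

lemma S5_SqT (p : P 5) : S5 (SqT 5 p) = SqT 5 (S5 p) := by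
  induction p using induction_on' with
  | monomial a c =>
    rw [monomial_eq_smul_mono, map_smul, map_smul, S5_SqT_mono, map_smul, map_smul]
  | add p q hp hq => rw [map_add, map_add, hp, hq, map_add, map_add]

lemma S5_homogeneousComponent (m : ℕ) (g : P 5) :
    S5 (homogeneousComponent (2 * m + 5) g) = homogeneousComponent m (S5 g) := by
  induction g using induction_on' with
  | monomial b c =>
    simp only [monomial_eq_smul_mono, map_smul, homogeneousComponent_mono, S5_mono]
    by_cases h : ∀ i, Odd (b i)
    · have hdeg := degA_eq_of_forall_odd h
      by_cases hm : degA (half b) = m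
      · rw [if_pos (by omega), S5_mono, if_pos h, homogeneousComponent_mono, if_pos hm]
      · rw [if_neg (by omega), if_pos h, homogeneousComponent_mono, if_neg hm, map_zero]
    · split_ifs <;> simp [S5_mono, h]
  | add p q hp hq => rw [map_add, map_add, hp, hq, map_add, map_add]

lemma S5_homogeneousComponent_eq_zero {D : ℕ} (hD : ∀ m, D ≠ 2 * m + 5) (g : P 5) :
    S5 (homogeneousComponent D g) = 0 := by
  induction g using induction_on' with
  | monomial b c =>
    simp only [monomial_eq_smul_mono, map_smul, homogeneousComponent_mono]
    split_ifs with hb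
    · rw [S5_mono, if_neg fun h => hD _ (hb ▸ degA_eq_of_forall_odd h), smul_zero]
    · rw [map_zero, smul_zero]
  | add p q hp hq => rw [map_add, map_add, hp, hq, add_zero]

lemma S5_mem_homSub {D : ℕ} {f : P 5} (hf : f ∈ homSub 5 D) :
    S5 f ∈ homSub 5 ((D - 5) / 2) := by
  rw [← homogeneousComponent_eq_self hf]
  by_cases hD : ∃ m, D = 2 * m + 5
  · obtain ⟨m, rfl⟩ := hD
    rw [S5_homogeneousComponent, show (2 * m + 5 - 5) / 2 = m by omega]
    exact homogeneousComponent_mem m _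
  · rw [S5_homogeneousComponent_eq_zero (not_exists.1 hD)]
    exact Submodule.zero_mem _

lemma S5_eq_zero_of_mem_homSub {D : ℕ} (hD : ∀ m, D ≠ 2 * m + 5) {f : P 5}
    (hf : f ∈ homSub 5 D) : S5 f = 0 := by
  rw [← homogeneousComponent_eq_self hf, S5_homogeneousComponent_eq_zero hD]

lemma isHit_S5 {m : ℕ} {u : P 5} (hu : IsHit 5 (2 * m + 5) u) : IsHit 5 m (S5 u) := by
  obtain ⟨f, hf, rfl⟩ := hu
  have hzero : ∀ i ∈ Finset.Icc 1 (2 * m + 5), i ∉ (Finset.Icc 1 m).image (2 * ·) →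
      S5 (f i) = 0 := by
    intro i hi hni
    refine S5_eq_zero_of_mem_homSub (fun k hk => hni ?_) (hf i)
    simp only [Finset.mem_Icc, Finset.mem_image] at hi ⊢
    exact ⟨m - k, by omega, by omega⟩
  refine ⟨fun j => S5 (f (2 * j)), fun j => ?_, ?_⟩
  · have := S5_mem_homSub (hf (2 * j))
    rwa [show (2 * m + 5 - 2 * j - 5) / 2 = m - j by omega] at this
  · have hsub : (Finset.Icc 1 m).image (2 * ·) ⊆ Finset.Icc 1 (2 * m + 5) := by
      intro i
      simp only [Finset.mem_Icc, Finset.mem_image]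
      omega
    rw [map_sum, Finset.sum_congr rfl fun i _ => by rw [S5_homogeneousComponent, S5_SqT],
      ← Finset.sum_subset hsub fun i hi hni => by rw [hzero i hi hni, map_zero, map_zero],
      Finset.sum_image fun _ _ _ _ h => by omega]

lemma Phi_mem_homSub {m : ℕ} {f : P 5} (hf : f ∈ homSub 5 m) :
    Phi f ∈ homSub 5 (2 * m + 5) := by
  have h := (IsHomogeneous.prod Finset.univ _ _ fun i _ => isHomogeneous_X (ZMod 2) i).mul
    (((mem_homogeneousSubmodule _ _).1 hf).pow 2)
  rw [mem_homogeneousSubmodule, Phi]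
  convert h using 1
  simp only [Finset.sum_const, Finset.card_univ, Fintype.card_fin, smul_eq_mul]
  ring

lemma Phi_sum {ι : Type*} (s : Finset ι) (f : ι → P 5) :
    Phi (∑ i ∈ s, f i) = ∑ i ∈ s, Phi (f i) := by
  simp only [Phi, sum_pow_char, Finset.mul_sum]

theorem isHit_of_cls_Phi_eq_zero {m : ℕ} {f : P 5} (hf : f ∈ homSub 5 m)
    (h : cls 5 (2 * m + 5) (Phi f) = 0) : IsHit 5 m f := by
  rw [cls_eq_zero_iff, homogeneousComponent_eq_self (Phi_mem_homSub hf)] at h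
  simpa only [S5_Phi] using isHit_S5 (isHit_of_mem_hitSub h)

end Kameko

open Kameko in
/-- In `(QP_5)_67`, the classes `[x_1x_2x_3x_4x_5 · a²]`, for `a` ranging
over the admissible monomials of degree `31` in `P_5`, are pairwise distinct and
linearly independent over `𝔽₂`. -/
theorem statement0 :
    LinearIndependent (ZMod 2)
      (fun a : {a : Fin 5 →₀ ℕ // degA a = 31 ∧ Admissible a} =>
        cls 5 67 (Phi (mono a.val))) ∧
    Function.Injective
      (fun a : {a : Fin 5 →₀ ℕ // degA a = 31 ∧ Admissible a} =>
        cls 5 67 (Phi (mono a.val))) := by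
  have hli : LinearIndependent (ZMod 2)
      fun a : {a : Fin 5 →₀ ℕ // degA a = 31 ∧ Admissible a} =>
        cls 5 67 (Phi (mono a.val)) := by
    refine linearIndependent_zmod_two_of_sum_eq_zero fun s hs => ?_
    set T := s.map (Function.Embedding.subtype _)
    have hT : ∀ a ∈ T, degA a = 31 ∧ Admissible a := by
      simp only [T, Finset.mem_map, Function.Embedding.coe_subtype]
      rintro _ ⟨a, _, rfl⟩
      exact a.2
    have hhit : IsHit 5 31 (∑ a ∈ T, mono a) := by
      refine isHit_of_cls_Phi_eq_zero
        (Submodule.sum_mem _ fun a ha => (hT a ha).1 ▸ mono_mem_homSub a) ?_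
      rwa [Phi_sum, cls_sum, Finset.sum_map]
    by_contra hne
    exact not_isHit_sum_mono (by simpa [T, Finset.nonempty_iff_ne_empty] using hne) hT hhit
  exact ⟨hli, hli.injective⟩

end
end

section
/- Every admissible monomial u of degree 67 in P_5 satisfies ω_1(u) = 3 or ω_1(u) = 5. -/
open MvPolynomial

noncomputable section

/-!
Since `67` is odd, `ω_1(u) = ∑_j a_j mod 2` is odd and at most `5`, so it suffices to show that a
monomial `u = x_j y²` with `deg y = 33` is hit (then `u` is inadmissible with no smaller monomials
at all). In characteristic `2` the sum `∑_{t ≤ 5} (x + x²)^{2^t}` telescopes to `x + x^{64}`, so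
`∑_{t ≤ 5} Sq(x_j^{2^t} y) = (x_j + x_j^{64}) Sq(y)`. As `Sq(y)` lives in degrees `33, …, 66` with
top component `y²`, the degree-`67` part of the right-hand side is `x_j y²`, while the degree-`67`
part of each `Sq(x_j^{2^t} y)` is `Sq^i(x_j^{2^t} y)` with `i = 34 - 2^t ≥ 2`.
-/

namespace MvPolynomial

variable {σ R : Type*} [CommSemiring R]

theorem coeff_eq_zero_of_totalDegree_le_of_lt {p : MvPolynomial σ R} {m : ℕ} {u : σ →₀ ℕ}
    (hp : p.totalDegree ≤ m) (hu : m < u.degree) : coeff u p = 0 :=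
  notMem_support_iff.mp fun h => (le_totalDegree h).trans hp |>.not_gt hu

theorem homogeneousComponent_mul_of_totalDegree_le {p q : MvPolynomial σ R} {m n : ℕ}
    (hp : p.totalDegree ≤ m) (hq : q.totalDegree ≤ n) :
    homogeneousComponent (m + n) (p * q) =
      homogeneousComponent m p * homogeneousComponent n q := by
  classical
  ext e
  rw [coeff_homogeneousComponent]
  split_ifs with he
  · rw [coeff_mul, coeff_mul]
    refine Finset.sum_congr rfl fun uv huv => ?_
    have hdeg : uv.1.degree + uv.2.degree = m + n := by
      rw [← map_add, Finset.HasAntidiagonal.mem_antidiagonal.mp huv, he]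
    simp only [coeff_homogeneousComponent]
    by_cases hu : uv.1.degree = m
    · rw [if_pos hu, if_pos (by omega)]
    · rw [if_neg hu, zero_mul]
      rcases lt_or_gt_of_ne hu with hlt | hgt
      · rw [coeff_eq_zero_of_totalDegree_le_of_lt hq (by omega), mul_zero]
      · rw [coeff_eq_zero_of_totalDegree_le_of_lt hp hgt, zero_mul]
  · exact ((homogeneousComponent_isHomogeneous m p).mul
      (homogeneousComponent_isHomogeneous n q)).coeff_eq_zero he |>.symm

theorem homogeneousComponent_prod_of_totalDegree_le {ι : Type*} (s : Finset ι)
    (p : ι → MvPolynomial σ R) (m : ι → ℕ) (hp : ∀ i ∈ s, (p i).totalDegree ≤ m i) :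
    homogeneousComponent (∑ i ∈ s, m i) (∏ i ∈ s, p i) =
      ∏ i ∈ s, homogeneousComponent (m i) (p i) := by
  classical
  induction s using Finset.induction_on with
  | empty => simp
  | insert i s hi ih =>
    rw [Finset.sum_insert hi, Finset.prod_insert hi, Finset.prod_insert hi,
      homogeneousComponent_mul_of_totalDegree_le (hp i (s.mem_insert_self i)),
      ih fun j hj => hp j (Finset.mem_insert_of_mem hj)]
    exact (totalDegree_finsetProd s p).trans
      (Finset.sum_le_sum fun j hj => hp j (Finset.mem_insert_of_mem hj))

theorem homogeneousComponent_pow_of_totalDegree_le {p : MvPolynomial σ R} {m : ℕ}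
    (hp : p.totalDegree ≤ m) (c : ℕ) :
    homogeneousComponent (c * m) (p ^ c) = homogeneousComponent m p ^ c := by
  simpa using homogeneousComponent_prod_of_totalDegree_le (Finset.range c) (fun _ => p)
    (fun _ => m) fun _ _ => hp

attribute [local instance] MvPolynomial.gradedAlgebra in
theorem homogeneousComponent_mul_of_mem_of_lt {a : MvPolynomial σ R} {i n : ℕ}
    (ha : a ∈ homogeneousSubmodule σ R i) (h : n < i) (b : MvPolynomial σ R) :
    homogeneousComponent n (a * b) = 0 := by
  rw [← decomposition.decompose'_apply]
  exact DirectSum.coe_decompose_mul_of_left_mem_of_not_le _ ha (by omega)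

attribute [local instance] MvPolynomial.gradedAlgebra in
theorem homogeneousComponent_add_mul_of_mem {a : MvPolynomial σ R} {i : ℕ}
    (ha : a ∈ homogeneousSubmodule σ R i) (n : ℕ) (b : MvPolynomial σ R) :
    homogeneousComponent (i + n) (a * b) = a * homogeneousComponent n b := by
  rw [← decomposition.decompose'_apply, ← decomposition.decompose'_apply]
  exact DirectSum.coe_decompose_mul_add_of_left_mem _ ha

theorem homogeneousComponent_two_X_add_X_sq (i : σ) :
    homogeneousComponent 2 (X i + X i ^ 2 : MvPolynomial σ R) = X i ^ 2 := by
  rw [map_add, homogeneousComponent_of_mem (isHomogeneous_X _ i),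
    homogeneousComponent_of_mem (isHomogeneous_X_pow i 2)]
  simp

theorem totalDegree_X_add_X_sq_le (i : σ) : (X i + X i ^ 2 : MvPolynomial σ R).totalDegree ≤ 2 :=
  (totalDegree_add _ _).trans (max_le ((isHomogeneous_X R i).totalDegree_le.trans one_le_two)
    (isHomogeneous_X_pow i 2).totalDegree_le)

end MvPolynomial

theorem sum_range_add_sq_pow_two_pow {R : Type*} [CommRing R] [CharP R 2] (x : R) (k : ℕ) :
    ∑ t ∈ Finset.range k, (x + x ^ 2) ^ 2 ^ t = x + x ^ 2 ^ k := by
  induction k with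
  | zero => simp [CharTwo.add_self_eq_zero]
  | succ k ih =>
    rw [Finset.sum_range_succ, ih, add_pow_char_pow, ← pow_mul, ← pow_succ',
      add_assoc, ← add_assoc (x ^ 2 ^ k), CharTwo.add_self_eq_zero, zero_add]

theorem degA_eq_degree {n : ℕ} (b : Fin n →₀ ℕ) : degA b = b.degree :=
  (Finsupp.degree_eq_sum b).symm

theorem mono_mem_homSub {n : ℕ} (b : Fin n →₀ ℕ) : mono b ∈ homSub n (degA b) :=
  isHomogeneous_monomial _ (degA_eq_degree b).symm

theorem mono_eq_prod {n : ℕ} (b : Fin n →₀ ℕ) : mono b = ∏ i, (X i : P n) ^ b i := by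
  rw [mono, monomial_eq, C_1, one_mul, Finsupp.prod_fintype _ _ fun _ => pow_zero _]

theorem SqT_X {n : ℕ} (j : Fin n) : SqT n (X j) = X j + X j ^ 2 :=
  aeval_X _ j

theorem SqT_mono {n : ℕ} (b : Fin n →₀ ℕ) : SqT n (mono b) = ∏ i, (X i + X i ^ 2) ^ b i := by
  rw [mono_eq_prod, map_prod]
  simp only [map_pow, SqT_X]

theorem homogeneousComponent_SqT_mono {n : ℕ} (b : Fin n →₀ ℕ) :
    homogeneousComponent (2 * degA b) (SqT n (mono b)) = mono b ^ 2 := by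
  have hdeg : 2 * degA b = ∑ i, b i * 2 := by rw [degA, Finset.mul_sum]; simp only [mul_comm]
  rw [hdeg, SqT_mono, homogeneousComponent_prod_of_totalDegree_le _ _ _ fun i _ =>
      (totalDegree_pow _ _).trans (Nat.mul_le_mul_left _ (totalDegree_X_add_X_sq_le i)),
    mono_eq_prod, ← Finset.prod_pow]
  refine Finset.prod_congr rfl fun i _ => ?_
  rw [homogeneousComponent_pow_of_totalDegree_le (totalDegree_X_add_X_sq_le i),
    homogeneousComponent_two_X_add_X_sq, ← pow_mul, ← pow_mul, mul_comm]

theorem mono_dvd_SqT_mono {n : ℕ} (b : Fin n →₀ ℕ) : mono b ∣ SqT n (mono b) := by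
  rw [SqT_mono, mono_eq_prod]
  exact Finset.prod_dvd_prod_of_dvd _ _ fun i _ => pow_dvd_pow_of_dvd
    (dvd_add (dvd_refl _) (dvd_pow_self _ two_ne_zero)) _

theorem homogeneousComponent_X_pow_mul_SqT_mono_of_lt {n m N : ℕ} (j : Fin n)
    (b : Fin n →₀ ℕ) (h : m < N + degA b) :
    homogeneousComponent m (X j ^ N * SqT n (mono b)) = 0 := by
  obtain ⟨g, hg⟩ := mono_dvd_SqT_mono b
  rw [hg, ← mul_assoc]
  exact homogeneousComponent_mul_of_mem_of_lt
    ((isHomogeneous_X_pow j N).mul (mono_mem_homSub b)) h g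

theorem IsHit.zero (n d : ℕ) : IsHit n d 0 :=
  ⟨0, fun _ => Submodule.zero_mem _, by simp⟩

theorem IsHit.add {n d : ℕ} {u v : P n} (hu : IsHit n d u) (hv : IsHit n d v) :
    IsHit n d (u + v) := by
  obtain ⟨f, hf, rfl⟩ := hu
  obtain ⟨g, hg, rfl⟩ := hv
  refine ⟨f + g, fun i => Submodule.add_mem _ (hf i) (hg i), ?_⟩
  simp only [Pi.add_apply, map_add, Finset.sum_add_distrib]

theorem IsHit.sum {n d : ℕ} {ι : Type*} (s : Finset ι) {u : ι → P n}
    (hu : ∀ t ∈ s, IsHit n d (u t)) : IsHit n d (∑ t ∈ s, u t) :=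
  Finset.sum_induction _ _ (fun _ _ => IsHit.add) (IsHit.zero n d) hu

theorem isHit_homogeneousComponent_SqT {n d i : ℕ} (hi : i ∈ Finset.Icc 1 d) {f : P n}
    (hf : f ∈ homSub n (d - i)) : IsHit n d (homogeneousComponent d (SqT n f)) := by
  classical
  refine ⟨fun k => if k = i then f else 0, fun k => ?_, ?_⟩
  · dsimp only
    split_ifs with hk
    · exact hk ▸ hf
    · exact Submodule.zero_mem _
  · simp [apply_ite, hi]

theorem isHit_X_mul_mono_sq {n : ℕ} (j : Fin n) (b : Fin n →₀ ℕ) {k : ℕ}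
    (hk : 2 ^ k ≤ degA b) (hk' : degA b + 2 ≤ 2 ^ (k + 1)) :
    IsHit n (2 * degA b + 1) (X j * mono b ^ 2) := by
  have htelescope : X j * mono b ^ 2 = ∑ t ∈ Finset.range (k + 1),
      homogeneousComponent (2 * degA b + 1) (SqT n (X j ^ 2 ^ t * mono b)) := by
    simp only [← map_sum, map_mul, map_pow, SqT_X, ← Finset.sum_mul,
      sum_range_add_sq_pow_two_pow, add_mul, map_add]
    rw [homogeneousComponent_X_pow_mul_SqT_mono_of_lt j b (by omega), add_zero, add_comm,
      homogeneousComponent_add_mul_of_mem (isHomogeneous_X _ j), homogeneousComponent_SqT_mono]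
  rw [htelescope]
  refine IsHit.sum _ fun t ht => ?_
  have h2t : 2 ^ t ≤ 2 ^ k := Nat.pow_le_pow_right two_pos (Finset.mem_range_succ_iff.mp ht)
  have h1t : 1 ≤ 2 ^ t := Nat.one_le_two_pow
  refine isHit_homogeneousComponent_SqT (i := degA b + 1 - 2 ^ t) ?_ ?_
  · simp only [Finset.mem_Icc]
    omega
  · rw [show 2 * degA b + 1 - (degA b + 1 - 2 ^ t) = 2 ^ t + degA b by omega]
    exact (isHomogeneous_X_pow j _).mul (mono_mem_homSub b)

theorem wVec_zero_eq_sum_mod_two {n : ℕ} (a : Fin n →₀ ℕ) : wVec a 0 = ∑ i, a i % 2 := by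
  refine Finset.sum_congr rfl fun i _ => ?_
  simp only [Nat.testBit_zero, decide_eq_true_eq]
  split_ifs <;> omega

theorem wVec_zero_le {n : ℕ} (a : Fin n →₀ ℕ) : wVec a 0 ≤ n := by
  rw [wVec_zero_eq_sum_mod_two]
  simpa using Finset.sum_le_card_nsmul Finset.univ (fun i => a i % 2) 1
    fun i _ => Nat.le_of_lt_succ (Nat.mod_lt _ two_pos)

theorem wVec_zero_mod_two {n : ℕ} (a : Fin n →₀ ℕ) : wVec a 0 % 2 = degA a % 2 := by
  rw [wVec_zero_eq_sum_mod_two, degA, ← Finset.sum_nat_mod]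

theorem exists_eq_single_add_two_smul_of_wVec_zero_eq_one {n : ℕ} {a : Fin n →₀ ℕ}
    (h : wVec a 0 = 1) : ∃ j b, a = Finsupp.single j 1 + 2 • b := by
  rw [wVec_zero_eq_sum_mod_two] at h
  obtain ⟨j, -, hj⟩ := Finset.exists_ne_zero_of_sum_ne_zero (h.trans_ne one_ne_zero)
  have hrest : ∀ i ≠ j, a i % 2 = 0 := fun i hi => by
    have : a j % 2 + ∑ i ∈ Finset.univ.erase j, a i % 2 = ∑ i, a i % 2 :=
      Finset.add_sum_erase _ (fun i => a i % 2) (Finset.mem_univ j)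
    have hzero : ∑ i ∈ Finset.univ.erase j, a i % 2 = 0 := by omega
    exact Finset.sum_eq_zero_iff.mp hzero i (Finset.mem_erase.mpr ⟨hi, Finset.mem_univ i⟩)
  refine ⟨j, a.mapRange (· / 2) (Nat.zero_div 2), Finsupp.ext fun i => ?_⟩
  simp only [Finsupp.add_apply, Finsupp.smul_apply, Finsupp.mapRange_apply, Finsupp.single_apply,
    smul_eq_mul]
  split_ifs with hij
  · subst hij; omega
  · have := hrest i (Ne.symm hij); omega

theorem mono_single_add_two_smul {n : ℕ} (j : Fin n) (b : Fin n →₀ ℕ) :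
    mono (Finsupp.single j 1 + 2 • b) = X j * mono b ^ 2 := by
  rw [mono, ← mul_one (1 : ZMod 2), ← monomial_mul, ← X, mono, monomial_pow, one_pow]

theorem degA_single_add_two_smul {n : ℕ} (j : Fin n) (b : Fin n →₀ ℕ) :
    degA (Finsupp.single j 1 + 2 • b) = 2 * degA b + 1 := by
  simp only [degA_eq_degree, map_add, map_nsmul, Finsupp.degree_single, smul_eq_mul]
  ring

theorem not_admissible_of_isHit {n : ℕ} {a : Fin n →₀ ℕ} (h : IsHit n (degA a) (mono a)) :
    ¬ Admissible a :=
  fun ha => ha ⟨∅, by simp, by simpa using h⟩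

/-- every admissible monomial `u = x^a` of degree `67` in `P_5` satisfies
`ω_1(u) = 3` or `ω_1(u) = 5`. -/
theorem statement12 (a : Fin 5 →₀ ℕ) (h1 : degA a = 67) (h2 : Admissible a) :
    wVec a 0 = 3 ∨ wVec a 0 = 5 := by
  by_contra hne
  have hw : wVec a 0 = 1 := by
    have := wVec_zero_le a
    have := wVec_zero_mod_two a
    omega
  obtain ⟨j, b, rfl⟩ := exists_eq_single_add_two_smul_of_wVec_zero_eq_one hw
  rw [degA_single_add_two_smul] at h1
  refine not_admissible_of_isHit ?_ h2
  rw [degA_single_add_two_smul, mono_single_add_two_smul]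
  exact isHit_X_mul_mono_sq j b (k := 5) (by omega) (by omega)

end
end
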